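/- The pseudo type vector (1,1,2,2) admits two pseudo linear configurations with different Hilbert functions: the standard one has Hilbert function (1,3,5,6,6,...), while a configuration of generically chosen points on the four lines consists of 6 points in general position and has Hilbert function (1,3,6,6,...). -/

import Mathlib

open MvPolynomial

noncomputable section

variable {k : Type} [Field k]

/-- The polynomial ring `k[x₀,x₁,x₂]`. -/
abbrev R3 (k : Type) [Field k] := MvPolynomial (Fin 3) k

/-- The ideal of polynomials vanishing on a set of affine representatives in `k³`. -/
def vIdeal (S : Set (Fin 3 → k)) : Ideal (R3 k) where
  carrier := {f | ∀ x ∈ S, eval x f = 0}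
  add_mem' := by intro a b ha hb x hx; simp [map_add, ha x hx, hb x hx]
  zero_mem' := by intro x _; simp
  smul_mem' := by intro c f hf x hx; simp [smul_eq_mul, map_mul, hf x hx]

/-- The (prime) ideal of the point of `ℙ²` with representative `p`. -/
def pointIdeal (p : Fin 3 → k) : Ideal (R3 k) := vIdeal {x | ∃ c : k, x = c • p}

/-- The radical (saturated) ideal of a finite set of points. -/
def radIdeal (X : Finset (Fin 3 → k)) : Ideal (R3 k) := ⨅ p ∈ X, pointIdeal p

/-- The saturated ideal of the first infinitesimal neighborhood (double point scheme). -/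
def dblIdeal (X : Finset (Fin 3 → k)) : Ideal (R3 k) := ⨅ p ∈ X, (pointIdeal p) ^ 2

/-- Hilbert function of `R/I` in degree `t`. -/
def hilb (I : Ideal (R3 k)) (t : ℕ) : ℕ :=
  Module.finrank k (homogeneousSubmodule (Fin 3) k t) -
    Module.finrank k ↥(Submodule.restrictScalars k I ⊓ homogeneousSubmodule (Fin 3) k t)

/-- Regularity of a zero-dimensional scheme: least `t > 0` with `Δ h_{R/I}(t) = 0`. -/
def regC (I : Ideal (R3 k)) : ℕ := sInf {t | 0 < t ∧ hilb I t = hilb I (t - 1)}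

/-- Two representatives give the same projective point. -/
def SameProj (p q : Fin 3 → k) : Prop := ∃ c : k, c ≠ 0 ∧ q = c • p

/-- A finite set of representatives of distinct points of `ℙ²`. -/
def GoodPoints (X : Finset (Fin 3 → k)) : Prop :=
  (∀ p ∈ X, p ≠ 0) ∧ ∀ p ∈ X, ∀ q ∈ X, p ≠ q → ¬ SameProj p q

/-- The point `q` lies on the line with normal vector `ℓ`. -/
def onLine (ℓ q : Fin 3 → k) : Prop := (∑ i, ℓ i * q i) = 0

/-- `t` distinct lines, no three concurrent: each line meets the others in distinct points. -/
def GenLines (t : ℕ) (ℓ : Fin t → (Fin 3 → k)) : Prop :=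
  (∀ i, ℓ i ≠ 0) ∧ (∀ i j, i ≠ j → ¬ SameProj (ℓ i) (ℓ j)) ∧
    ∀ i j l, i ≠ j → j ≠ l → i ≠ l →
      ∀ p : Fin 3 → k, p ≠ 0 → ¬ (onLine (ℓ i) p ∧ onLine (ℓ j) p ∧ onLine (ℓ l) p)

/-- `X` is (a set of representatives of) the `t.choose 2` pairwise intersection
points of the lines `ℓ`. -/
def IsIntersectionConfig (t : ℕ) (ℓ : Fin t → (Fin 3 → k)) (X : Finset (Fin 3 → k)) : Prop :=
  GoodPoints X ∧ X.card = t.choose 2 ∧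
    (∀ p ∈ X, ∃ i j, i ≠ j ∧ onLine (ℓ i) p ∧ onLine (ℓ j) p) ∧
    (∀ i j, i ≠ j → ∃ p ∈ X, onLine (ℓ i) p ∧ onLine (ℓ j) p)

/-- The linear form with coefficient vector `a`. -/
def linForm (a : Fin 3 → k) : R3 k := ∑ i, C (a i) * X i

/-- `F` is (up to scalar) a product of `d` lines, each meeting the remaining
lines in `d-1` distinct points. -/
def IsGeneralLineUnion (d : ℕ) (F : R3 k) : Prop :=
  ∃ (c : k) (ℓ : Fin d → (Fin 3 → k)), c ≠ 0 ∧ GenLines d ℓ ∧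
    F = C c * ∏ i, linForm (ℓ i)

/-- `p` is a singular point of the curve `F`. -/
def IsSing (F : R3 k) (p : Fin 3 → k) : Prop :=
  p ≠ 0 ∧ ∀ i, eval p (pderiv i F) = 0

/-- `p` is an ordinary double point (node) of `F`: singular, and the Hessian has rank 2. -/
def IsNode (F : R3 k) (p : Fin 3 → k) : Prop :=
  IsSing F p ∧ (Matrix.of fun i j => eval p (pderiv i (pderiv j F))).rank = 2

/-- `f` is homogeneous of degree `d`. -/
def IsHomog (f : R3 k) (d : ℕ) : Prop := f ∈ homogeneousSubmodule (Fin 3) k d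

/-- `I` is a homogeneous ideal. -/
def HomogIdeal (I : Ideal (R3 k)) : Prop :=
  ∀ f ∈ I, ∀ d, homogeneousComponent d f ∈ I

/-- `I` is saturated with respect to the irrelevant maximal ideal. -/
def IsSat (I : Ideal (R3 k)) : Prop :=
  ∀ f : R3 k, (∀ i : Fin 3, X i * f ∈ I) → f ∈ I

/-- `{F, G}` is a regular sequence on `R`. -/
def RegPair (F G : R3 k) : Prop :=
  F ≠ 0 ∧ ∀ a : R3 k, G * a ∈ Ideal.span {F} → a ∈ Ideal.span {F}

/-- `J` is obtained from `I` by a basic double link `J = G·I + (F)`. -/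
def BDLStep (I J : Ideal (R3 k)) : Prop :=
  ∃ (F G : R3 k) (d1 d2 : ℕ), F ∈ I ∧ IsHomog F d1 ∧ IsHomog G d2 ∧ RegPair F G ∧
    J = Ideal.span {G} * I ⊔ Ideal.span {F}

/-- The irrelevant maximal ideal `(x₀,x₁,x₂)`. -/
def mIdeal : Ideal (R3 k) := Ideal.span {X 0, X 1, X 2}

/-- `(g, M)` is a graded free resolution `0 → ⊕ R(-d2 j) → ⊕ R(-d1 i) → I → 0`:
the `g i` are homogeneous of degree `d1 i` and generate `I`, the syzygies among the
`g i` are exactly the `R`-combinations of the columns of the homogeneous matrix `M`,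
and the columns of `M` are independent. -/
def GFRes (I : Ideal (R3 k)) {a b : ℕ} (d1 : Fin a → ℕ) (d2 : Fin b → ℕ)
    (g : Fin a → R3 k) (M : Fin a → Fin b → R3 k) : Prop :=
  (∀ i, IsHomog (g i) (d1 i)) ∧
  Ideal.span (Set.range g) = I ∧
  (∀ i j, M i j ≠ 0 → d1 i ≤ d2 j) ∧
  (∀ i j, IsHomog (M i j) (d2 j - d1 i)) ∧
  (∀ v : Fin a → R3 k, (∑ i, v i * g i = 0) ↔ ∃ c : Fin b → R3 k, ∀ i, v i = ∑ j, c j * M i j) ∧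
  (∀ c : Fin b → R3 k, (∀ i, ∑ j, c j * M i j = 0) → c = 0)

/-- The resolution with syzygy matrix `M` is minimal. -/
def MinRes {a b : ℕ} (M : Fin a → Fin b → R3 k) : Prop :=
  ∀ i j, constantCoeff (M i j) = 0

/-- A pseudo type vector `(m 0, …, m (p-1))`. -/
def IsPseudoType (p : ℕ) (m : ℕ → ℕ) : Prop :=
  (∀ i, i < p → 0 < m i) ∧ (∀ i, i + 1 < p → m i ≤ m (i + 1)) ∧
  (∀ i, i + 2 < p → m i = m (i + 1) → m (i + 1) < m (i + 2))

/-- Condition (*): between any two zero entries of `ΔT'` there is an entry `> 1`. -/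
def CondStar (p : ℕ) (m : ℕ → ℕ) : Prop :=
  ∀ i j, i + 1 < p → j + 1 < p → i < j → m i = m (i + 1) → m j = m (j + 1) →
    ∃ l, i + 2 ≤ l ∧ l ≤ j ∧ m (l - 1) + 2 ≤ m l

/-- The `i`-th summand (shifted by `p-1-i`) of the standard O-sequence of a pseudo
type vector, evaluated at `t`. -/
def sTerm (p : ℕ) (m : ℕ → ℕ) (i t : ℕ) : ℕ :=
  let prev : ℕ := if i = 0 then 0 else m (i - 1)
  let next : ℕ := if i + 1 < p then m (i + 1) else m i + 1
  let shift : ℕ := p - 1 - i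
  if m i = next then 0
  else if prev = m i then
    (if t = shift then 1 else if shift < t ∧ t < shift + m i then 2
     else if t = shift + m i then 1 else 0)
  else (if shift ≤ t ∧ t < shift + m i then 1 else 0)

/-- The standard O-sequence associated to a pseudo type vector. -/
def sOS (p : ℕ) (m : ℕ → ℕ) (t : ℕ) : ℕ := ∑ i ∈ Finset.range p, sTerm p m i t

/-- The standard Hilbert function associated to a pseudo type vector. -/
def SHF (p : ℕ) (m : ℕ → ℕ) (t : ℕ) : ℕ := ∑ j ∈ Finset.range (t + 1), sOS p m j

/-- A pseudo linear configuration of type `(m 0, …, m (p-1))` on the lines `ℓ`. -/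
def PseudoConfig (p : ℕ) (m : ℕ → ℕ) (ℓ : ℕ → (Fin 3 → k))
    (Xc : ℕ → Finset (Fin 3 → k)) : Prop :=
  (∀ i, i < p → ℓ i ≠ 0) ∧
  (∀ i j, i < p → j < p → i ≠ j → ¬ SameProj (ℓ i) (ℓ j)) ∧
  (∀ i, i < p → (Xc i).card = m i ∧ GoodPoints (Xc i)) ∧
  (∀ i, i < p → ∀ q ∈ Xc i, onLine (ℓ i) q) ∧
  (∀ i j, i < p → j < p → j ≠ i → ∀ q ∈ Xc i, ¬ onLine (ℓ j) q)

/-- The ideal of a pseudo linear configuration. -/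
def pcRad (p : ℕ) (Xc : ℕ → Finset (Fin 3 → k)) : Ideal (R3 k) :=
  ⨅ i ∈ Finset.range p, radIdeal (Xc i)

/-- A k-configuration of type `(n 0, …, n (r-1))` in `ℙ²`. -/
def KConfig (r : ℕ) (n : Fin r → ℕ) (ℓ : Fin r → (Fin 3 → k))
    (Xc : Fin r → Finset (Fin 3 → k)) : Prop :=
  (∀ i, ℓ i ≠ 0) ∧ (∀ i j, i ≠ j → ¬ SameProj (ℓ i) (ℓ j)) ∧
  (∀ i, (Xc i).card = n i ∧ GoodPoints (Xc i)) ∧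
  (∀ i, ∀ q ∈ Xc i, onLine (ℓ i) q) ∧
  (∀ i j : Fin r, j < i → ∀ q ∈ Xc j, ¬ onLine (ℓ i) q)

/-- A linear configuration of type `(n 0, …, n (r-1))` in `ℙ²`. -/
def LinearConfig (r : ℕ) (n : Fin r → ℕ) (ℓ : Fin r → (Fin 3 → k))
    (Xc : Fin r → Finset (Fin 3 → k)) : Prop :=
  (∀ i, ℓ i ≠ 0) ∧ (∀ i j, i ≠ j → ¬ SameProj (ℓ i) (ℓ j)) ∧
  (∀ i, (Xc i).card = n i ∧ GoodPoints (Xc i)) ∧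
  (∀ i, ∀ q ∈ Xc i, onLine (ℓ i) q) ∧
  (∀ i j, j ≠ i → ∀ q ∈ Xc i, ¬ onLine (ℓ j) q)

/-- The ideal of (the union of the points of) a configuration given by groups. -/
def lcRad {r : ℕ} (Xc : Fin r → Finset (Fin 3 → k)) : Ideal (R3 k) :=
  ⨅ i, radIdeal (Xc i)

/-- The ideal of the double points supported on a configuration given by groups. -/
def lcDbl {r : ℕ} (Xc : Fin r → Finset (Fin 3 → k)) : Ideal (R3 k) :=
  ⨅ i, dblIdeal (Xc i)

/-- Hilbert function of `d` points on a line (with value `0` in negative degrees). -/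
def hl (d : ℕ) (j : ℤ) : ℕ := if j < 0 then 0 else min (j.toNat + 1) d

/-- The Hilbert function associated to a 2-type vector `(n 0 < … < n (r-1))`:
`h(j) = h_r(j) + h_{r-1}(j-1) + ⋯ + h_1(j-(r-1))`. -/
def hT (r : ℕ) (n : Fin r → ℕ) (j : ℕ) : ℕ :=
  ∑ i : Fin r, hl (n i) ((j : ℤ) - ((r - 1 - (i : ℕ) : ℕ) : ℤ))

/-- The associated pseudo type vector of a 2-type vector, as a sorted list:
`(n₁, 2n₁, …, n_r, 2n_r)` in nondecreasing order. -/
def assocList (r : ℕ) (n : Fin r → ℕ) : List ℕ :=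
  List.insertionSort (· ≤ ·) (List.ofFn n ++ List.ofFn fun i => 2 * n i)

/-- The associated pseudo type vector as a function. -/
def assocPTV (r : ℕ) (n : Fin r → ℕ) : ℕ → ℕ := fun j => (assocList r n).getD j 0

/-!
A form of degree `t` vanishes on the line through `p` as soon as it vanishes at `p`, so the
Hilbert function of a finite set of points is the rank of evaluation at the points on forms of
degree `t`. This rank is at most `min (binom(t+2, 2), #points)`, it does not decrease with `t`
(multiply by a coordinate that vanishes at none of the points), and it is at least `r` whenever
`r` of the points can be separated by curves of degree `t`, here unions of `t` lines through all
of them but one. In the standard configuration four points lie on the line `x = 0`; the third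
finite difference along that line kills every conic, so the six points impose only five
conditions on conics. The second configuration is separated by pairs of lines, so it already
imposes six independent conditions on conics.
-/

open Module

namespace MvPolynomial

variable {σ R : Type*} [CommSemiring R]

theorem IsHomogeneous.eval_smul {f : MvPolynomial σ R} {n : ℕ} (hf : f.IsHomogeneous n)
    (c : R) (x : σ → R) : eval (c • x) f = c ^ n * eval x f := by
  have hspan : f ∈ Submodule.span R ((monomial · 1) '' {d : σ →₀ ℕ | d.degree = n}) := by
    rw [← restrictSupport_eq_span, restrictSupport, ← homogeneousSubmodule_eq_finsupp_supported]
    exact hf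
  clear hf
  induction hspan using Submodule.span_induction with
  | mem g hg =>
    obtain ⟨d, hd, rfl⟩ := hg
    simp only [eval_monomial, one_mul, Finsupp.prod, Pi.smul_apply, smul_eq_mul, mul_pow,
      Finset.prod_mul_distrib, Finset.prod_pow_eq_pow_sum]
    rw [← Finsupp.degree_apply, hd]
  | zero => simp
  | add g h _ _ hg hh => rw [map_add, map_add, hg, hh, mul_add]
  | smul a g _ hg => rw [smul_eval, smul_eval, hg, mul_left_comm]

instance [Finite σ] (n : ℕ) : Module.Finite R (homogeneousSubmodule σ R n) :=
  Module.Finite.iff_fg.mpr (homogeneousSubmodule_fg σ R n)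

theorem finrank_homogeneousSubmodule {K : Type*} [Field K] [Fintype σ] (n : ℕ) :
    finrank K (homogeneousSubmodule σ K n) = (Fintype.card σ + n - 1).choose n := by
  classical
  have hset : {d : σ →₀ ℕ | d.degree = n} =
      ((Finset.univ.finsuppAntidiag n : Finset (σ →₀ ℕ)) : Set (σ →₀ ℕ)) := by
    ext d
    simp [Finsupp.degree_eq_sum]
  rw [homogeneousSubmodule_eq_finsupp_supported]
  change finrank K (restrictSupport K _) = _
  rw [finrank_eq_nat_card_basis (basisRestrictSupport K _), hset, Nat.card_coe_set_eq,
    Set.ncard_coe_finset, Finset.card_finsuppAntidiag_nat_eq_choose, Finset.card_univ]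

end MvPolynomial

section PointEvaluation

variable {σ ι : Type*}

def evalVec (pts : ι → σ → k) : MvPolynomial σ k →ₗ[k] ι → k :=
  LinearMap.pi fun i => (aeval (pts i)).toLinearMap

@[simp]
theorem evalVec_apply (pts : ι → σ → k) (f : MvPolynomial σ k) (i : ι) :
    evalVec pts f i = eval (pts i) f := by
  simp [evalVec]

def hilbOfPoints (pts : ι → σ → k) (t : ℕ) : ℕ :=
  finrank k ((homogeneousSubmodule σ k t).map (evalVec pts))

theorem hilbOfPoints_le_finrank [Finite σ] (pts : ι → σ → k) (t : ℕ) :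
    hilbOfPoints pts t ≤ finrank k (homogeneousSubmodule σ k t) :=
  Submodule.finrank_map_le _ _

theorem le_hilbOfPoints [Finite σ] {r t : ℕ} (pts : ι → σ → k) (e : Fin r → ι)
    (f : Fin r → MvPolynomial σ k) (hf : ∀ j, f j ∈ homogeneousSubmodule σ k t)
    (hsep : ∀ i j, eval (pts (e i)) (f j) = 0 ↔ i ≠ j) :
    r ≤ hilbOfPoints pts t := by
  let v : Fin r → (homogeneousSubmodule σ k t).map (evalVec pts) :=
    fun j => ⟨evalVec pts (f j), Submodule.mem_map_of_mem (hf j)⟩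
  have hv : LinearIndependent k v := by
    refine LinearIndependent.of_comp (Submodule.subtype _) ?_
    rw [Fintype.linearIndependent_iff]
    intro c hc i
    have hi := congrFun hc (e i)
    simp only [Function.comp_apply, Submodule.subtype_apply, Finset.sum_apply, Pi.smul_apply,
      evalVec_apply, smul_eq_mul, v] at hi
    rw [Finset.sum_eq_single i (fun j _ hji => by rw [(hsep i j).2 hji.symm, mul_zero])
      (by simp)] at hi
    exact (mul_eq_zero.1 hi).resolve_right (by simpa using hsep i i)
  simpa [hilbOfPoints] using hv.fintype_card_le_finrank

theorem hilbOfPoints_zero [Fintype σ] [Nonempty ι] (pts : ι → σ → k) :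
    hilbOfPoints pts 0 = 1 :=
  le_antisymm ((hilbOfPoints_le_finrank pts 0).trans (by simp [finrank_homogeneousSubmodule]))
    (le_hilbOfPoints pts (fun _ => Classical.arbitrary ι) (fun _ => 1)
      (fun _ => isHomogeneous_one σ k) (by simp))

theorem hilbOfPoints_mono [Finite σ] (pts : ι → σ → k) (j : σ) (hj : ∀ i, pts i j ≠ 0) :
    Monotone (hilbOfPoints pts) := by
  refine monotone_nat_of_le_succ fun t => ?_
  let D : (ι → k) →ₗ[k] ι → k := LinearMap.pi fun i => pts i j • LinearMap.proj i
  have hD : Function.Injective D := by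
    rw [← LinearMap.ker_eq_bot, LinearMap.ker_eq_bot']
    intro w hw
    funext i
    simpa [D, hj i] using congrFun hw i
  have hmap : ((homogeneousSubmodule σ k t).map (evalVec pts)).map D ≤
      (homogeneousSubmodule σ k (t + 1)).map (evalVec pts) := by
    rintro - ⟨-, ⟨f, hf, rfl⟩, rfl⟩
    refine ⟨X j * f, by simpa [add_comm] using (isHomogeneous_X k j).mul hf, ?_⟩
    funext i
    simp [D]
  calc hilbOfPoints pts t = finrank k (((homogeneousSubmodule σ k t).map (evalVec pts)).map D) :=
        (Submodule.equivMapOfInjective D hD _).finrank_eq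
    _ ≤ hilbOfPoints pts (t + 1) := Submodule.finrank_mono hmap

variable [Fintype ι]

theorem hilbOfPoints_le_card (pts : ι → σ → k) (t : ℕ) :
    hilbOfPoints pts t ≤ Fintype.card ι :=
  (Submodule.finrank_le _).trans (finrank_fintype_fun_eq_card k).le

theorem hilbOfPoints_lt_card (pts : ι → σ → k) (t : ℕ)
    (φ : (ι → k) →ₗ[k] k) (hφ : φ ≠ 0)
    (hmon : ∀ d : σ →₀ ℕ, d.degree = t → φ (evalVec pts (monomial d 1)) = 0) :
    hilbOfPoints pts t < Fintype.card ι := by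
  have hle : (homogeneousSubmodule σ k t).map (evalVec pts) ≤ LinearMap.ker φ := by
    rw [homogeneousSubmodule_eq_finsupp_supported]
    change Submodule.map _ (restrictSupport k _) ≤ _
    rw [restrictSupport_eq_span, Submodule.map_span, Submodule.span_le]
    rintro - ⟨-, ⟨d, hd, rfl⟩, rfl⟩
    exact hmon d hd
  have hker : LinearMap.ker φ ≠ ⊤ := fun h => hφ (LinearMap.ker_eq_top.1 h)
  calc hilbOfPoints pts t ≤ finrank k (LinearMap.ker φ) := Submodule.finrank_mono hle
    _ < finrank k (ι → k) := Submodule.finrank_lt hker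
    _ = Fintype.card ι := finrank_fintype_fun_eq_card k

end PointEvaluation

section PlanePoints

variable {ι : Type*}

theorem isHomogeneous_linForm (a : Fin 3 → k) : (linForm a).IsHomogeneous 1 :=
  IsHomogeneous.sum Finset.univ _ 1 fun i _ => by
    simpa using (isHomogeneous_C (Fin 3) (a i)).mul (isHomogeneous_X k i)

theorem mem_radIdeal_iff_of_isHomogeneous {S : Finset (Fin 3 → k)} {f : R3 k} {t : ℕ}
    (hf : f.IsHomogeneous t) : f ∈ radIdeal S ↔ ∀ p ∈ S, eval p f = 0 := by
  simp only [radIdeal, pointIdeal, Ideal.mem_iInf]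
  refine ⟨fun h p hp => h p hp p ⟨1, (one_smul k p).symm⟩, ?_⟩
  rintro h p hp _ ⟨c, rfl⟩
  rw [hf.eval_smul, h p hp, mul_zero]

theorem hilb_radIdeal_eq_hilbOfPoints (S : Finset (Fin 3 → k)) (pts : ι → Fin 3 → k)
    (hS : (S : Set (Fin 3 → k)) = Set.range pts) (t : ℕ) :
    hilb (radIdeal S) t = hilbOfPoints pts t := by
  set Rt := homogeneousSubmodule (Fin 3) k t
  have hker : (radIdeal S).restrictScalars k ⊓ Rt = LinearMap.ker (evalVec pts) ⊓ Rt := by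
    ext f
    simp only [Submodule.mem_inf, Submodule.restrictScalars_mem, LinearMap.mem_ker]
    refine and_congr_left fun hf => ?_
    rw [mem_radIdeal_iff_of_isHomogeneous hf, funext_iff]
    simp [← Finset.mem_coe, hS]
  have hrank := LinearMap.finrank_range_add_finrank_ker (evalVec pts ∘ₗ Rt.subtype)
  rw [LinearMap.range_comp, Submodule.range_subtype, LinearMap.ker_comp,
    ← Submodule.finrank_map_subtype_eq, Submodule.map_comap_subtype, inf_comm] at hrank
  rw [hilb, hker, ← hrank, hilbOfPoints, Nat.add_sub_cancel_right]

theorem le_hilbOfPoints_of_lines {r t : ℕ} (pts : ι → Fin 3 → k) (e : Fin r → ι)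
    (L : Fin r → Fin t → Fin 3 → k)
    (hsep : ∀ i j, (∃ l, onLine (L j l) (pts (e i))) ↔ i ≠ j) :
    r ≤ hilbOfPoints pts t := by
  refine le_hilbOfPoints pts e (fun j => ∏ l, linForm (L j l)) (fun j => ?_) fun i j => ?_
  · simpa using IsHomogeneous.prod (Finset.univ : Finset (Fin t)) _ (fun _ => 1)
      fun l _ => isHomogeneous_linForm (L j l)
  · simp [linForm, Finset.prod_eq_zero_iff, ← hsep i j, onLine]

theorem hilbOfPoints_le_min [Fintype ι] (pts : ι → Fin 3 → k) (t : ℕ) :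
    hilbOfPoints pts t ≤ min ((t + 2).choose 2) (Fintype.card ι) := by
  refine le_min ?_ (hilbOfPoints_le_card pts t)
  have h := hilbOfPoints_le_finrank pts t
  rwa [finrank_homogeneousSubmodule, Fintype.card_fin, show 3 + t - 1 = t + 2 by omega,
    Nat.choose_symm_add] at h

end PlanePoints

section ParallelLines

theorem goodPoints_of_forall_eq_one {S : Finset (Fin 3 → k)} (h : ∀ q ∈ S, q 2 = 1) :
    GoodPoints S := by
  refine ⟨fun q hq h0 => by simpa [h0] using h q hq, ?_⟩
  rintro p hp q hq hne ⟨c, -, rfl⟩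
  have hc : c = 1 := by simpa [h p hp] using h _ hq
  exact hne (by rw [hc, one_smul])

theorem onLine_single_sub_single (j : Fin 3) (c : k) (q : Fin 3 → k) :
    onLine (Pi.single j 1 - Pi.single 2 c) q ↔ q j = c * q 2 := by
  simp [onLine, sub_mul, Finset.sum_sub_distrib, Pi.single_apply, sub_eq_zero]

theorem pseudoConfig_of_parallel {p : ℕ} {m : ℕ → ℕ} {j : Fin 3} (hj : j ≠ 2)
    (c : ℕ → k) (hc : ∀ a < p, ∀ b < p, c a = c b → a = b)
    (Xc : ℕ → Finset (Fin 3 → k))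
    (hcard : ∀ i < p, (Xc i).card = m i) (hX : ∀ i < p, ∀ q ∈ Xc i, q 2 = 1 ∧ q j = c i) :
    PseudoConfig p m (fun i => Pi.single j 1 - Pi.single 2 (c i)) Xc := by
  refine ⟨fun i _ h => ?_, fun a b ha hb hab => ?_, fun i hi => ⟨hcard i hi, ?_⟩,
    fun i hi q hq => ?_, fun i i' hi hi' hne q hq => ?_⟩
  · simpa [hj] using congrFun h j
  · rintro ⟨s, -, h⟩
    have hs : s = 1 := by simpa [hj] using (congrFun h j).symm
    subst hs
    exact hab (hc a ha b hb (by simpa [hj.symm] using (congrFun h 2).symm))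
  · exact goodPoints_of_forall_eq_one fun q hq => (hX i hi q hq).1
  · obtain ⟨h2, hjq⟩ := hX i hi q hq
    simp [onLine_single_sub_single j, h2, hjq]
  · obtain ⟨h2, hjq⟩ := hX i hi q hq
    rw [onLine_single_sub_single j, h2, hjq, mul_one]
    exact fun h => hne (hc i' hi' i hi h.symm)

theorem pcRad_eq_radIdeal_biUnion [DecidableEq k] (p : ℕ) (Xc : ℕ → Finset (Fin 3 → k)) :
    pcRad p Xc = radIdeal ((Finset.range p).biUnion Xc) := by
  simp only [pcRad, radIdeal]
  rw [Finset.iInf_biUnion]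

end ParallelLines

section StandardConfiguration

def stdPoints : Fin 6 → Fin 3 → k :=
  ![![0, 3, 1], ![0, 2, 1], ![0, 1, 1], ![1, 1, 1], ![0, 0, 1], ![1, 0, 1]]

def stdSet [DecidableEq k] : Finset (Fin 3 → k) :=
  {![(0 : k), 3, 1], ![(0 : k), 2, 1], ![(0 : k), 1, 1], ![(1 : k), 1, 1],
    ![(0 : k), 0, 1], ![(1 : k), 0, 1]}

def stdGroups [DecidableEq k] : ℕ → Finset (Fin 3 → k)
  | 0 => {![0, 3, 1]}
  | 1 => {![0, 2, 1]}
  | 2 => {![0, 1, 1], ![1, 1, 1]}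
  | _ => {![0, 0, 1], ![1, 0, 1]}

theorem coe_stdSet [DecidableEq k] :
    ((stdSet : Finset (Fin 3 → k)) : Set (Fin 3 → k)) = Set.range stdPoints := by
  ext q
  simp [stdSet, stdPoints, or_comm, or_left_comm]

theorem biUnion_stdGroups [DecidableEq k] :
    (Finset.range 4).biUnion stdGroups = (stdSet : Finset (Fin 3 → k)) := by
  ext q
  simp [stdSet, stdGroups, Finset.range_add_one, or_comm, or_left_comm]

theorem pseudoConfig_stdGroups [CharZero k] [DecidableEq k] :
    PseudoConfig 4 (fun i => i / 2 + 1)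
      (fun i => (Pi.single 1 1 - Pi.single 2 (3 - i : k) : Fin 3 → k)) stdGroups := by
  refine pseudoConfig_of_parallel (by decide) _ (fun a _ b _ h => ?_) _ (fun i hi => ?_)
    fun i hi q hq => ?_
  · exact_mod_cast sub_right_injective h
  · interval_cases i <;> simp [stdGroups]
  · interval_cases i <;> simp only [stdGroups, Finset.mem_insert, Finset.mem_singleton] at hq <;>
      obtain rfl | rfl := hq <;> simp <;> norm_num

variable [CharZero k]

theorem hilbOfPoints_stdPoints_one : hilbOfPoints (stdPoints (k := k)) 1 = 3 := by
  refine le_antisymm ((hilbOfPoints_le_min _ 1).trans (by simp)) ?_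
  refine le_hilbOfPoints_of_lines _ ![4, 5, 2]
    ![![![1, 1, -1]], ![![1, 0, 0]], ![![0, 1, 0]]] ?_
  intro i j
  fin_cases i <;> fin_cases j <;> simp [onLine, stdPoints, Fin.sum_univ_three]

theorem hilbOfPoints_stdPoints_two : hilbOfPoints (stdPoints (k := k)) 2 = 5 := by
  refine le_antisymm (Nat.le_of_lt_succ ?_) ?_
  · -- `stdPoints` 0, 1, 2, 4 are `[0 : y : 1]` for `y = 3, 2, 1, 0`, and the third finite
    -- difference kills the restriction of a conic to the line `x = 0`.
    refine hilbOfPoints_lt_card _ 2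
      (LinearMap.proj 0 - 3 • LinearMap.proj 1 + 3 • LinearMap.proj 2 - LinearMap.proj 4)
      (fun h => by simpa using LinearMap.congr_fun h (Pi.single 0 1)) fun d hd => ?_
    have hline (y : k) : eval ![0, y, 1] (monomial d 1) = 0 ^ d 0 * y ^ d 1 := by
      simp [eval_monomial, Finsupp.prod_fintype, Fin.prod_univ_three]
    rw [Finsupp.degree_eq_sum, Fin.sum_univ_three] at hd
    simp only [LinearMap.sub_apply, LinearMap.add_apply, LinearMap.smul_apply,
      LinearMap.proj_apply, evalVec_apply, stdPoints, Matrix.cons_val, hline]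
    rcases Nat.eq_zero_or_pos (d 0) with h0 | h0
    · have : d 1 ≤ 2 := by omega
      interval_cases h : d 1 <;> simp [h0] <;> norm_num
    · simp [zero_pow h0.ne']
  · refine le_hilbOfPoints_of_lines _ ![0, 1, 3, 4, 5]
      ![![![0, 1, 0], ![1, 1, -2]],
        ![![0, 1, 0], ![2, 1, -3]],
        ![![0, 1, 0], ![1, 0, 0]],
        ![![1, 1, -2], ![3, 1, -3]],
        ![![1, 0, 0], ![0, 1, -1]]] ?_
    intro i j
    fin_cases i <;> fin_cases j <;>
      simp [onLine, stdPoints, Fin.sum_univ_three, Fin.exists_fin_succ] <;> norm_num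

theorem hilbOfPoints_stdPoints_three : hilbOfPoints (stdPoints (k := k)) 3 = 6 := by
  refine le_antisymm ((hilbOfPoints_le_card _ 3).trans (by simp)) ?_
  refine le_hilbOfPoints_of_lines _ ![0, 1, 2, 3, 4, 5]
    ![![![0, 1, 0], ![0, 1, -1], ![0, 1, -2]],
      ![![0, 1, 0], ![0, 1, -1], ![0, 1, -3]],
      ![![0, 1, 0], ![0, 1, -2], ![2, 1, -3]],
      ![![0, 1, 0], ![0, 1, 0], ![1, 0, 0]],
      ![![0, 1, -1], ![0, 1, -2], ![3, 1, -3]],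
      ![![1, 0, 0], ![1, 0, 0], ![0, 1, -1]]] ?_
  intro i j
  fin_cases i <;> fin_cases j <;>
    simp [onLine, stdPoints, Fin.sum_univ_three, Fin.exists_fin_succ] <;> norm_num

theorem hilbOfPoints_stdPoints_of_three_le {t : ℕ} (ht : 3 ≤ t) :
    hilbOfPoints (stdPoints (k := k)) t = 6 :=
  le_antisymm ((hilbOfPoints_le_card _ t).trans (by simp))
    (hilbOfPoints_stdPoints_three.symm.le.trans
      (hilbOfPoints_mono _ 2 (fun i => by fin_cases i <;> simp [stdPoints]) ht))

end StandardConfiguration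

section GenericConfiguration

def genPoints : Fin 6 → Fin 3 → k :=
  ![![0, 1, 1], ![1, 2, 1], ![2, 1, 1], ![2, 3, 1], ![3, 0, 1], ![3, 1, 1]]

def genGroups [DecidableEq k] : ℕ → Finset (Fin 3 → k)
  | 0 => {![0, 1, 1]}
  | 1 => {![1, 2, 1]}
  | 2 => {![2, 1, 1], ![2, 3, 1]}
  | _ => {![3, 0, 1], ![3, 1, 1]}

theorem coe_biUnion_genGroups [DecidableEq k] :
    (((Finset.range 4).biUnion genGroups : Finset (Fin 3 → k)) : Set (Fin 3 → k)) =
      Set.range genPoints := by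
  ext q
  simp [genGroups, genPoints, Finset.range_add_one, or_comm, or_left_comm]

theorem pseudoConfig_genGroups [CharZero k] [DecidableEq k] :
    PseudoConfig 4 (fun i => i / 2 + 1)
      (fun i => (Pi.single 0 1 - Pi.single 2 (i : k) : Fin 3 → k)) genGroups := by
  refine pseudoConfig_of_parallel (by decide) _ (fun a _ b _ h => ?_) _ (fun i hi => ?_)
    fun i hi q hq => ?_
  · exact_mod_cast h
  · interval_cases i <;> simp [genGroups]
  · interval_cases i <;> simp only [genGroups, Finset.mem_insert, Finset.mem_singleton] at hq <;>
      obtain rfl | rfl := hq <;> simp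

variable [CharZero k]

theorem hilbOfPoints_genPoints_one : hilbOfPoints (genPoints (k := k)) 1 = 3 := by
  refine le_antisymm ((hilbOfPoints_le_min _ 1).trans (by simp)) ?_
  refine le_hilbOfPoints_of_lines _ ![0, 1, 4]
    ![![![1, 1, -3]], ![![1, 3, -3]], ![![1, -1, 1]]] ?_
  intro i j
  fin_cases i <;> fin_cases j <;> simp [onLine, genPoints, Fin.sum_univ_three] <;> norm_num

theorem hilbOfPoints_genPoints_two : hilbOfPoints (genPoints (k := k)) 2 = 6 := by
  refine le_antisymm ((hilbOfPoints_le_card _ 2).trans (by simp)) ?_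
  refine le_hilbOfPoints_of_lines _ ![0, 1, 2, 3, 4, 5]
    ![![![1, 1, -3], ![2, 1, -7]],
      ![![0, 1, -1], ![3, 1, -9]],
      ![![1, -1, 1], ![1, 0, -3]],
      ![![0, 1, -1], ![1, 1, -3]],
      ![![0, 1, -1], ![1, -1, 1]],
      ![![1, -1, 1], ![1, 1, -3]]] ?_
  intro i j
  fin_cases i <;> fin_cases j <;>
    simp [onLine, genPoints, Fin.sum_univ_three, Fin.exists_fin_succ] <;> norm_num

theorem hilbOfPoints_genPoints (t : ℕ) :
    hilbOfPoints (genPoints (k := k)) t = min ((t + 2).choose 2) 6 := by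
  match t with
  | 0 => simp [hilbOfPoints_zero]
  | 1 => simp [hilbOfPoints_genPoints_one]
  | t + 2 =>
    refine le_antisymm ((hilbOfPoints_le_min _ _).trans_eq (by simp)) ?_
    calc min ((t + 2 + 2).choose 2) 6 ≤ 6 := min_le_right _ _
      _ = hilbOfPoints genPoints 2 := hilbOfPoints_genPoints_two.symm
      _ ≤ hilbOfPoints genPoints (t + 2) :=
        hilbOfPoints_mono _ 2 (fun i => by fin_cases i <;> simp [genPoints]) (by omega)

end GenericConfiguration

/-- the pseudo type vector `(1,1,2,2)` admits two pseudo linear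
configurations with different Hilbert functions: the standard one has Hilbert
function `(1,3,5,6,6,…)`, while generically chosen points give six points in
general position with Hilbert function `(1,3,6,6,…)`. -/
theorem stmt13 [CharZero k] [DecidableEq k] :
    let Sstd : Finset (Fin 3 → k) :=
      {![(0 : k), 3, 1], ![(0 : k), 2, 1], ![(0 : k), 1, 1], ![(1 : k), 1, 1],
        ![(0 : k), 0, 1], ![(1 : k), 0, 1]}
    let m : ℕ → ℕ := fun i => i / 2 + 1
    (∃ (ℓ : ℕ → (Fin 3 → k)) (Xc : ℕ → Finset (Fin 3 → k)),
        PseudoConfig 4 m ℓ Xc ∧ pcRad 4 Xc = radIdeal Sstd) ∧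
    hilb (radIdeal Sstd) 0 = 1 ∧ hilb (radIdeal Sstd) 1 = 3 ∧
    hilb (radIdeal Sstd) 2 = 5 ∧ (∀ t, 3 ≤ t → hilb (radIdeal Sstd) t = 6) ∧
    (∃ (ℓ' : ℕ → (Fin 3 → k)) (Xc' : ℕ → Finset (Fin 3 → k)),
        PseudoConfig 4 m ℓ' Xc' ∧
        ∀ t, hilb (pcRad 4 Xc') t = min ((t + 2).choose 2) 6) := by
  intro Sstd m
  have hstd (t : ℕ) : hilb (radIdeal Sstd) t = hilbOfPoints stdPoints t :=
    hilb_radIdeal_eq_hilbOfPoints stdSet stdPoints coe_stdSet t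
  refine ⟨⟨_, stdGroups, pseudoConfig_stdGroups, ?_⟩, ?_, ?_, ?_, fun t ht => ?_,
    ⟨_, genGroups, pseudoConfig_genGroups, fun t => ?_⟩⟩
  · rw [pcRad_eq_radIdeal_biUnion, biUnion_stdGroups]; rfl
  · rw [hstd, hilbOfPoints_zero]
  · rw [hstd, hilbOfPoints_stdPoints_one]
  · rw [hstd, hilbOfPoints_stdPoints_two]
  · rw [hstd, hilbOfPoints_stdPoints_of_three_le ht]
  · rw [pcRad_eq_radIdeal_biUnion,
      hilb_radIdeal_eq_hilbOfPoints _ genPoints coe_biUnion_genGroups, hilbOfPoints_genPoints]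

end
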